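/- Let {u^ε}_{ε>0} ⊂ H¹(Ω) and suppose that as ε → 0, u^ε ⇀ u, χ_{Ω_ε} u^ε_x ⇀ g₀, and u^ε_y ⇀ g₁, all weakly in L²(Ω). Then u ∈ H¹(Ω) and ∇u = (g₀, g₁)ᵀ. -/

import Mathlib

/- Common infrastructure: the domain Ω = (-1,1)², the fault region S_ε,
   weak derivatives, H¹ membership, vanishing boundary values on the top and
   bottom boundaries (via zero extension), traces on horizontal lines,
   the elastic energies, and weak L² convergence as ε → 0. -/

open MeasureTheory Set Filter Topology

noncomputable section

abbrev Pt := ℝ × ℝ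

/-- The cross-section Ω = (-1,1) × (-1,1). -/
def Om : Set Pt := Ioo (-1 : ℝ) 1 ×ˢ Ioo (-1 : ℝ) 1

/-- The fault region S_ε = (-1,1) × (-ε/2, ε/2). -/
def Sf (ε : ℝ) : Set Pt := Ioo (-1 : ℝ) 1 ×ˢ Ioo (-ε/2) (ε/2)

/-- The elastic region Ω_ε = Ω \ closure S_ε. -/
def OmE (ε : ℝ) : Set Pt := Om \ closure (Sf ε)

/-- The fault line S₀ = (-1,1) × {0}. -/
def S0 : Set Pt := Ioo (-1 : ℝ) 1 ×ˢ ({0} : Set ℝ)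

/-- Ω₀ = Ω \ S₀. -/
def Om0 : Set Pt := Om \ S0

/-- Partial derivative in the first (horizontal) variable of a smooth function. -/
def pdx (φ : Pt → ℝ) (p : Pt) : ℝ := fderiv ℝ φ p (1, 0)

/-- Partial derivative in the second (vertical) variable of a smooth function. -/
def pdy (φ : Pt → ℝ) (p : Pt) : ℝ := fderiv ℝ φ p (0, 1)

/-- Test functions: smooth, compactly supported inside the open set A. -/
def TestOn (A : Set Pt) (φ : Pt → ℝ) : Prop :=
  ContDiff ℝ (⊤ : ℕ∞) φ ∧ HasCompactSupport φ ∧ tsupport φ ⊆ A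

/-- g is the weak x-derivative of u on A. -/
def IsWeakDx (A : Set Pt) (u g : Pt → ℝ) : Prop :=
  ∀ φ : Pt → ℝ, TestOn A φ →
    ∫ p in A, u p * pdx φ p = - ∫ p in A, g p * φ p

/-- g is the weak y-derivative of u on A. -/
def IsWeakDy (A : Set Pt) (u g : Pt → ℝ) : Prop :=
  ∀ φ : Pt → ℝ, TestOn A φ →
    ∫ p in A, u p * pdy φ p = - ∫ p in A, g p * φ p

/-- membership of L²(A). -/
def L2On (A : Set Pt) (f : Pt → ℝ) : Prop := MemLp f 2 (volume.restrict A)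

/-- membership of L²(-1,1). -/
def L2I (f : ℝ → ℝ) : Prop := MemLp f 2 (volume.restrict (Ioo (-1 : ℝ) 1))

/-- (u, ux, uy) is an H¹(A) function together with its weak gradient. -/
def IsH1On (A : Set Pt) (u ux uy : Pt → ℝ) : Prop :=
  L2On A u ∧ L2On A ux ∧ L2On A uy ∧ IsWeakDx A u ux ∧ IsWeakDy A u uy

/-- Extension by zero outside A. -/
def extZ (A : Set Pt) (f : Pt → ℝ) : Pt → ℝ := fun p => open Classical in if p ∈ A then f p else 0

/-- The region A extended through the top and bottom boundaries y = ±1. -/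
def extTB (A : Set Pt) : Set Pt := A ∪ (Ioo (-1 : ℝ) 1 ×ˢ {y : ℝ | 1 < |y|})

/-- u(x,±1) = 0: the zero extension of u across the top and bottom boundaries is
    again an H¹ function (this characterizes vanishing traces at y = ±1). -/
def VanishTB (A : Set Pt) (u ux uy : Pt → ℝ) : Prop :=
  IsWeakDx (extTB A) (extZ A u) (extZ A ux) ∧ IsWeakDy (extTB A) (extZ A u) (extZ A uy)

/-- tr is the trace on the horizontal line y = c of u from the region A ∩ {y > c},
    characterized by the Gauss–Green identity. -/
def IsUpperTrace (A : Set Pt) (u uy : Pt → ℝ) (c : ℝ) (tr : ℝ → ℝ) : Prop :=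
  ∀ φ : Pt → ℝ, ContDiff ℝ (⊤ : ℕ∞) φ → HasCompactSupport φ → tsupport φ ⊆ Om →
    ∫ p in A ∩ {p : Pt | c < p.2}, (u p * pdy φ p + uy p * φ p)
      = - ∫ x in Ioo (-1 : ℝ) 1, tr x * φ (x, c)

/-- tr is the trace on the horizontal line y = c of u from the region A ∩ {y < c}. -/
def IsLowerTrace (A : Set Pt) (u uy : Pt → ℝ) (c : ℝ) (tr : ℝ → ℝ) : Prop :=
  ∀ φ : Pt → ℝ, ContDiff ℝ (⊤ : ℕ∞) φ → HasCompactSupport φ → tsupport φ ⊆ Om →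
    ∫ p in A ∩ {p : Pt | p.2 < c}, (u p * pdy φ p + uy p * φ p)
      = ∫ x in Ioo (-1 : ℝ) 1, tr x * φ (x, c)

/-- Squared H¹(A) norm. -/
def h1nsq (A : Set Pt) (u ux uy : Pt → ℝ) : ℝ :=
  ∫ p in A, ((u p) ^ 2 + (ux p) ^ 2 + (uy p) ^ 2)

/-- The isotropic strain energy density 2W(A) = ℂ(A):A with shear modulus m and
    bulk modulus l, applied to the matrix with rows (a11 a12), (a21 a22). -/
def Wd (m l a11 a12 a21 a22 : ℝ) : ℝ :=
  m * (a11 ^ 2 + a22 ^ 2) + l / 2 * (a11 + a22) ^ 2 + m / 2 * (a12 + a21) ^ 2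

/-- The scaled elastic energy I_ε(u) of a displacement u = (u₁,u₂) with weak
    gradient entries u1x u1y u2x u2y, for given moduli and slip γ = γ(x). -/
def Ieps (mu lam : Pt → ℝ) (γ : ℝ → ℝ) (ε : ℝ) (u1x u1y u2x u2y : Pt → ℝ) : ℝ :=
  (∫ p in OmE ε, Wd (mu p) (lam p) (u1x p) (u1y p) (u2x p) (u2y p))
  + ∫ p in Sf ε, Wd (mu p) (lam p) (u1x p)
      (Real.sqrt ε * u1y p - γ p.1 / Real.sqrt ε) (Real.sqrt ε * u2x p) (u2y p)

/-- The limit energy I(u) where jump is the jump [u₁] across S₀. -/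
def Ilim (mu lam : Pt → ℝ) (γ : ℝ → ℝ) (u1x u1y u2x u2y : Pt → ℝ) (jump : ℝ → ℝ) : ℝ :=
  (∫ p in Om0, Wd (mu p) (lam p) (u1x p) (u1y p) (u2x p) (u2y p))
  + (1 / 2) * ∫ x in Ioo (-1 : ℝ) 1, mu (x, 0) * (jump x - γ x) ^ 2

/-- The filter of ε → 0 with 0 < ε < 1/2. -/
def epsFilter : Filter ℝ := 𝓝[Ioo (0 : ℝ) (1 / 2)] 0

/-- F ε ⇀ f weakly in L²(A) as ε → 0. -/
def WeakL2LimE (A : Set Pt) (F : ℝ → Pt → ℝ) (f : Pt → ℝ) : Prop :=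
  ∀ v : Pt → ℝ, L2On A v →
    Tendsto (fun ε => ∫ p in A, F ε p * v p) epsFilter (𝓝 (∫ p in A, f p * v p))

/-- The inverse φ_ε⁻¹ : Ω₀ → Ω_ε of the piecewise affine map φ_ε. -/
def psiE (ε : ℝ) (p : Pt) : Pt :=
  if 0 < p.2 then (p.1, (1 - ε / 2) * p.2 + ε / 2) else (p.1, (1 - ε / 2) * p.2 - ε / 2)

/-- E_ε(u) = u ∘ φ_ε⁻¹. -/
def Eeps (ε : ℝ) (f : Pt → ℝ) : Pt → ℝ := fun p => f (psiE ε p)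

/-- one-dimensional weak derivative on the interval (a,b). -/
def IsWeakD1 (a b : ℝ) (u g : ℝ → ℝ) : Prop :=
  ∀ φ : ℝ → ℝ, ContDiff ℝ (⊤ : ℕ∞) φ → HasCompactSupport φ → tsupport φ ⊆ Ioo a b →
    ∫ x in Ioo a b, u x * deriv φ x = - ∫ x in Ioo a b, g x * φ x

/-!
Pass to the limit in the weak-derivative identities of `u^ε`. For `∂_y` this is immediate.
For `∂_x` only `χ_{Ω_ε} u^ε_x` converges, so first test against `φ(x,y) χ_δ(y)` with a smooth
cutoff `χ_δ` vanishing on `|y| ≤ δ`: once `ε ≤ 2δ` the test function vanishes on the closed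
fault `S̄_ε`, so the indicator changes nothing. Then let `δ → 0` by dominated convergence,
using that the line `y = 0` is a null set.
-/

instance epsFilter_neBot : epsFilter.NeBot :=
  mem_closure_iff_nhdsWithin_neBot.mp <| by
    rw [closure_Ioo (by norm_num : (0 : ℝ) ≠ 1 / 2)]
    norm_num

lemma eventually_mem_Ioo_epsFilter : ∀ᶠ ε in epsFilter, ε ∈ Ioo (0 : ℝ) (1 / 2) :=
  self_mem_nhdsWithin

lemma eventually_lt_epsFilter {c : ℝ} (hc : 0 < c) : ∀ᶠ ε in epsFilter, ε < c :=
  nhdsWithin_le_nhds (eventually_lt_nhds hc)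

lemma measurableSet_Om : MeasurableSet Om := measurableSet_Ioo.prod measurableSet_Ioo

lemma volume_Om_ne_top : volume Om ≠ ⊤ :=
  ((Metric.isBounded_Ioo (-1 : ℝ) 1).prod (Metric.isBounded_Ioo (-1 : ℝ) 1)).measure_lt_top.ne

lemma L2On.integrableOn {A : Set Pt} {f : Pt → ℝ} (hA : volume A ≠ ⊤) (hf : L2On A f) :
    IntegrableOn f A :=
  haveI : IsFiniteMeasure (volume.restrict A) := isFiniteMeasure_restrict.mpr hA
  hf.integrable one_le_two

lemma abs_snd_le_of_mem_closure_Sf {ε : ℝ} {p : Pt} (hp : p ∈ closure (Sf ε)) :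
    |p.2| ≤ ε / 2 := by
  refine closure_minimal (fun q hq => ?_) (isClosed_le (continuous_abs.comp continuous_snd)
    continuous_const) hp
  obtain ⟨-, hlo, hhi⟩ := hq
  exact abs_le.mpr ⟨by linarith, hhi.le⟩

lemma ae_snd_ne_zero : ∀ᵐ p : Pt, p.2 ≠ 0 := by
  have hline : {p : Pt | ¬p.2 ≠ 0} = univ ×ˢ {0} := by
    ext ⟨x, y⟩
    simp
  rw [ae_iff, hline, Measure.volume_eq_prod, Measure.prod_prod]
  simp

namespace TestOn

variable {A : Set Pt} {φ : Pt → ℝ}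

lemma l2On (hφ : TestOn A φ) (B : Set Pt) : L2On B φ :=
  hφ.1.continuous.memLp_of_hasCompactSupport hφ.2.1

lemma continuous_pdx (hφ : TestOn A φ) : Continuous (pdx φ) :=
  (hφ.1.continuous_fderiv (by simp)).clm_apply continuous_const

lemma hasCompactSupport_pdx (hφ : TestOn A φ) : HasCompactSupport (pdx φ) :=
  (hφ.2.1.fderiv ℝ).comp_left (g := fun L : Pt →L[ℝ] ℝ => L (1, 0)) rfl

lemma l2On_pdx (hφ : TestOn A φ) (B : Set Pt) : L2On B (pdx φ) :=
  hφ.continuous_pdx.memLp_of_hasCompactSupport hφ.hasCompactSupport_pdx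

lemma l2On_pdy (hφ : TestOn A φ) (B : Set Pt) : L2On B (pdy φ) :=
  ((hφ.1.continuous_fderiv (by simp)).clm_apply continuous_const).memLp_of_hasCompactSupport
    ((hφ.2.1.fderiv ℝ).comp_left (g := fun L : Pt →L[ℝ] ℝ => L (0, 1)) rfl)

lemma mul_comp_snd (hφ : TestOn A φ) {χ : ℝ → ℝ} (hχ : ContDiff ℝ (⊤ : ℕ∞) χ) :
    TestOn A (fun q => χ q.2 * φ q) :=
  ⟨(hχ.comp contDiff_snd).mul hφ.1, hφ.2.1.mul_left, tsupport_mul_subset_right.trans hφ.2.2⟩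

end TestOn

lemma pdx_mul_comp_snd {χ : ℝ → ℝ} {φ : Pt → ℝ} {p : Pt} (hχ : DifferentiableAt ℝ χ p.2)
    (hφ : DifferentiableAt ℝ φ p) :
    pdx (fun q => χ q.2 * φ q) p = χ p.2 * pdx φ p := by
  have hχ' : HasFDerivAt (fun q : Pt => χ q.2) (deriv χ p.2 • ContinuousLinearMap.snd ℝ ℝ ℝ) p :=
    hχ.hasDerivAt.comp_hasFDerivAt p hasFDerivAt_snd
  rw [pdx, show (fun q => χ q.2 * φ q) = (fun q : Pt => χ q.2) * φ from rfl,
    (hχ'.mul hφ.hasFDerivAt).fderiv]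
  simp [pdx]

lemma WeakL2LimE.integral_mul_eq_neg {A : Set Pt} {F G : ℝ → Pt → ℝ} {f g v w : Pt → ℝ}
    (hF : WeakL2LimE A F f) (hG : WeakL2LimE A G g) (hv : L2On A v) (hw : L2On A w)
    (h : ∀ᶠ ε in epsFilter, ∫ p in A, F ε p * v p = -∫ p in A, G ε p * w p) :
    ∫ p in A, f p * v p = -∫ p in A, g p * w p :=
  tendsto_nhds_unique (hF v hv) ((hG w hw).neg.congr' (h.mono fun _ hε => hε.symm))

lemma isWeakDy_of_weakL2LimE {uf ufy : ℝ → Pt → ℝ} {u g : Pt → ℝ}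
    (hD : ∀ ε ∈ Ioo (0 : ℝ) (1 / 2), IsWeakDy Om (uf ε) (ufy ε))
    (hu : WeakL2LimE Om uf u) (hg : WeakL2LimE Om ufy g) : IsWeakDy Om u g := fun φ hφ =>
  hu.integral_mul_eq_neg hg (hφ.l2On_pdy Om) (hφ.l2On Om)
    (eventually_mem_Ioo_epsFilter.mono fun ε hε => hD ε hε φ hφ)

/-- Vanishes for `|y| ≤ δ` and equals `1` for `y² ≥ 2δ²`. -/
def cutoff (δ y : ℝ) : ℝ := Real.smoothTransition ((y ^ 2 - δ ^ 2) / δ ^ 2)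

lemma contDiff_cutoff (δ : ℝ) : ContDiff ℝ (⊤ : ℕ∞) (cutoff δ) :=
  Real.smoothTransition.contDiff.comp (((contDiff_id.pow 2).sub contDiff_const).div_const _)

lemma abs_cutoff_le_one (δ y : ℝ) : |cutoff δ y| ≤ 1 := by
  rw [cutoff, abs_of_nonneg (Real.smoothTransition.nonneg _)]
  exact Real.smoothTransition.le_one _

lemma cutoff_eq_zero {δ y : ℝ} (hδ : 0 < δ) (hy : |y| ≤ δ) : cutoff δ y = 0 := by
  refine Real.smoothTransition.zero_of_nonpos (div_nonpos_of_nonpos_of_nonneg ?_ (by positivity))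
  nlinarith [abs_nonneg y, sq_abs y]

lemma tendsto_cutoff {y : ℝ} (hy : y ≠ 0) :
    Tendsto (fun δ => cutoff δ y) (𝓝[>] 0) (𝓝 1) := by
  refine tendsto_const_nhds.congr' ?_
  have hsmall : ∀ᶠ δ in 𝓝[>] (0 : ℝ), δ < |y| / 2 :=
    nhdsWithin_le_nhds (eventually_lt_nhds (by positivity))
  filter_upwards [self_mem_nhdsWithin, hsmall] with δ (hδ : 0 < δ) hδy
  refine (Real.smoothTransition.one_of_one_le ?_).symm
  rw [le_div_iff₀ (by positivity)]
  nlinarith [sq_abs y, abs_nonneg y]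

lemma tendsto_setIntegral_mul_cutoff {A : Set Pt} {f v : Pt → ℝ} (hf : IntegrableOn f A)
    (hv : Continuous v) (hvcs : HasCompactSupport v) :
    Tendsto (fun δ => ∫ p in A, f p * (cutoff δ p.2 * v p)) (𝓝[>] 0)
      (𝓝 (∫ p in A, f p * v p)) := by
  obtain ⟨C, hC⟩ := hv.bounded_above_of_compact_support hvcs
  refine tendsto_integral_filter_of_dominated_convergence (fun p => ‖f p‖ * C)
    (Eventually.of_forall fun δ => hf.aestronglyMeasurable.mul
      ((((contDiff_cutoff δ).continuous.comp continuous_snd).mul hv).aestronglyMeasurable))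
    (Eventually.of_forall fun δ => ae_of_all _ fun p => ?_) (hf.norm.mul_const C)
    (ae_restrict_of_ae (ae_snd_ne_zero.mono fun p hp => ?_))
  · rw [norm_mul, norm_mul, Real.norm_eq_abs (cutoff δ p.2)]
    gcongr
    calc |cutoff δ p.2| * ‖v p‖ ≤ 1 * ‖v p‖ := by gcongr; exact abs_cutoff_le_one δ p.2
      _ ≤ C := by rw [one_mul]; exact hC p
  · simpa using ((tendsto_cutoff hp).mul_const (v p)).const_mul (f p)

section WeakDx

variable {uf ufx : ℝ → Pt → ℝ} {u g : Pt → ℝ}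
  (hD : ∀ ε ∈ Ioo (0 : ℝ) (1 / 2), IsWeakDx Om (uf ε) (ufx ε))
  (hu : WeakL2LimE Om uf u) (hg : WeakL2LimE Om (fun ε => (OmE ε).indicator (ufx ε)) g)
include hD hu hg

lemma integral_mul_cutoff_pdx_eq {φ : Pt → ℝ} (hφ : TestOn Om φ) {δ : ℝ} (hδ : 0 < δ) :
    ∫ p in Om, u p * (cutoff δ p.2 * pdx φ p) = -∫ p in Om, g p * (cutoff δ p.2 * φ p) := by
  set ψ : Pt → ℝ := fun q => cutoff δ q.2 * φ q
  have hψ : TestOn Om ψ := hφ.mul_comp_snd (contDiff_cutoff δ)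
  have hpdx : pdx ψ = fun p => cutoff δ p.2 * pdx φ p := funext fun p =>
    pdx_mul_comp_snd ((contDiff_cutoff δ).differentiable (by simp) _)
      (hφ.1.differentiable (by simp) _)
  suffices ∫ p in Om, u p * pdx ψ p = -∫ p in Om, g p * ψ p by rwa [hpdx] at this
  refine hu.integral_mul_eq_neg hg (hψ.l2On_pdx Om) (hψ.l2On Om) ?_
  filter_upwards [eventually_mem_Ioo_epsFilter, eventually_lt_epsFilter (by positivity : 0 < 2 * δ)]
    with ε hε hεδ
  rw [hD ε hε ψ hψ]
  congr 1
  refine setIntegral_congr_fun measurableSet_Om fun p hp => ?_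
  by_cases hpε : p ∈ OmE ε
  · simp [hpε]
  · have hy : |p.2| ≤ δ := by
      have := abs_snd_le_of_mem_closure_Sf (not_not.mp fun h => hpε ⟨hp, h⟩)
      linarith
    simp [ψ, cutoff_eq_zero hδ hy]

lemma isWeakDx_of_weakL2LimE (hu2 : L2On Om u) (hg2 : L2On Om g) : IsWeakDx Om u g :=
  fun _ hφ => tendsto_nhds_unique
    (tendsto_setIntegral_mul_cutoff (hu2.integrableOn volume_Om_ne_top) hφ.continuous_pdx
      hφ.hasCompactSupport_pdx)
    ((tendsto_setIntegral_mul_cutoff (hg2.integrableOn volume_Om_ne_top) hφ.1.continuous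
      hφ.2.1).neg.congr' (eventually_mem_nhdsWithin.mono fun _ hδ =>
        (integral_mul_cutoff_pdx_eq hD hu hg hφ hδ).symm))

end WeakDx

/-- Lemma 1.2 (3): if u^ε ∈ H¹(Ω) with u^ε ⇀ u, χ_{Ω_ε} u^ε_x ⇀ g₀ and u^ε_y ⇀ g₁
weakly in L²(Ω) as ε → 0, then u ∈ H¹(Ω) with ∇u = (g₀,g₁)ᵀ. -/
theorem weak_limit_H1_Omega (uf ufx ufy : ℝ → Pt → ℝ)
    (hH1 : ∀ ε ∈ Ioo (0 : ℝ) (1 / 2), IsH1On Om (uf ε) (ufx ε) (ufy ε))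
    (u g0 g1 : Pt → ℝ)
    (hu : L2On Om u) (hg0 : L2On Om g0) (hg1 : L2On Om g1)
    (h1 : WeakL2LimE Om uf u)
    (h2 : WeakL2LimE Om (fun ε => (OmE ε).indicator (ufx ε)) g0)
    (h3 : WeakL2LimE Om ufy g1) :
    IsH1On Om u g0 g1 :=
  ⟨hu, hg0, hg1,
    isWeakDx_of_weakL2LimE (fun ε hε => (hH1 ε hε).2.2.2.1) h1 h2 hu hg0,
    isWeakDy_of_weakL2LimE (fun ε hε => (hH1 ε hε).2.2.2.2) h1 h3⟩
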